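/- If f : [0,1]ⁿ → ℝ is L-Lipschitz with respect to the Euclidean norm, then for every d ∈ ℕⁿ with all dⱼ ≥ 1 and every x ∈ [0,1]ⁿ, |B_{f,d}(x) − f(x)| ≤ (L/2)·(Σ_{j=1}^{n} 1/dⱼ)^{1/2}. -/
import Mathlib


open Finset

lemma bw_sum (d : ℕ) (x : ℝ) :
    ∑ ν ∈ Finset.range (d + 1), ((d.choose ν : ℝ) * x ^ ν * (1 - x) ^ (d - ν)) = 1 := by
  have h := bernsteinPolynomial.sum ℝ d
  have := congrArg (Polynomial.eval x) h
  simpa [bernsteinPolynomial, Polynomial.eval_finset_sum] using this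

lemma bw_var (d : ℕ) (x : ℝ) :
    ∑ ν ∈ Finset.range (d + 1),
      ((d : ℝ) * x - ν) ^ 2 * ((d.choose ν : ℝ) * x ^ ν * (1 - x) ^ (d - ν)) =
      (d : ℝ) * x * (1 - x) := by
  have h := bernsteinPolynomial.variance (R := ℝ) d
  have := congrArg (Polynomial.eval x) h
  simpa [bernsteinPolynomial, Polynomial.eval_finset_sum] using this

lemma bw_var_le (d : ℕ) (hd : 1 ≤ d) (x : ℝ) (hx : x ∈ Set.Icc (0:ℝ) 1) :
    ∑ ν ∈ Finset.range (d + 1),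
      ((ν : ℝ) / d - x) ^ 2 * ((d.choose ν : ℝ) * x ^ ν * (1 - x) ^ (d - ν)) ≤
      1 / (4 * (d:ℝ)) := by
  have hd' : (0:ℝ) < d := by exact_mod_cast hd
  have key : ∀ ν : ℕ, ((ν : ℝ) / d - x) ^ 2 = ((d : ℝ) * x - ν) ^ 2 / (d : ℝ) ^ 2 := by
    intro ν; field_simp; ring
  simp_rw [key, div_mul_eq_mul_div, ← Finset.sum_div, bw_var]
  rw [div_le_div_iff₀ (by positivity) (by positivity)]
  nlinarith [mul_nonneg (sq_nonneg (d:ℝ)) (sq_nonneg (1 - 2*x)), hx.1, hx.2]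

/-- The multivariate Bernstein polynomial of `f` with multidegree `d`. -/
noncomputable def bernstein' {n : ℕ} (d : Fin n → ℕ)
    (f : EuclideanSpace ℝ (Fin n) → ℝ) (x : EuclideanSpace ℝ (Fin n)) : ℝ :=
  ∑ k : (i : Fin n) → Fin (d i + 1),
    f ((EuclideanSpace.equiv (Fin n) ℝ).symm fun i => (k i : ℝ) / (d i)) *
      ∏ i : Fin n,
        (((d i).choose (k i) : ℝ) * x i ^ (k i : ℕ) * (1 - x i) ^ (d i - (k i : ℕ)))

/-- Bernstein approximation error bound for Lipschitz functions on `[0,1]ⁿ`: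
`|B_{f,d}(x) − f(x)| ≤ (L/2)·(Σⱼ 1/dⱼ)^(1/2)`. -/
theorem bernstein_error_lipschitz (n : ℕ) (d : Fin n → ℕ) (hd : ∀ i, 1 ≤ d i)
    (L : ℝ) (hL : 0 < L) (f : EuclideanSpace ℝ (Fin n) → ℝ)
    (hf : ∀ x, (∀ i, x i ∈ Set.Icc (0 : ℝ) 1) →
      ∀ y, (∀ i, y i ∈ Set.Icc (0 : ℝ) 1) → |f x - f y| ≤ L * ‖x - y‖) :
    ∀ x : EuclideanSpace ℝ (Fin n), (∀ i, x i ∈ Set.Icc (0 : ℝ) 1) →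
      |bernstein' d f x - f x| ≤ L / 2 * Real.sqrt (∑ i : Fin n, 1 / (d i : ℝ)) := by
  intro x hx
  classical
  set w : (i : Fin n) → ℕ → ℝ :=
    fun i m => ((d i).choose m : ℝ) * x i ^ m * (1 - x i) ^ (d i - m) with hwdef
  set W : ((i : Fin n) → Fin (d i + 1)) → ℝ := fun k => ∏ i, w i (k i) with hWdef
  set p : ((i : Fin n) → Fin (d i + 1)) → EuclideanSpace ℝ (Fin n) :=
    fun k => (EuclideanSpace.equiv (Fin n) ℝ).symm fun i => (k i : ℝ) / (d i) with hpdef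
  have hw0 : ∀ i m, 0 ≤ w i m := by
    intro i m
    have h0 := (hx i).1; have h1 := (hx i).2
    apply mul_nonneg (mul_nonneg (by positivity) (by positivity))
    exact pow_nonneg (by linarith) _
  have hwsum : ∀ i, ∑ m : Fin (d i + 1), w i (m : ℕ) = 1 := by
    intro i
    rw [Fin.sum_univ_eq_sum_range (fun m => w i m) (d i + 1)]
    exact bw_sum (d i) (x i)
  have hW0 : ∀ k, 0 ≤ W k := fun k => Finset.prod_nonneg fun i _ => hw0 i _
  have hW1 : ∑ k, W k = 1 := by
    simp only [hWdef]
    exact (Fintype.prod_sum fun i (m : Fin (d i + 1)) => w i (m : ℕ)).symm.trans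
      (Finset.prod_eq_one fun i _ => hwsum i)
  have hvar : ∀ i, ∑ m : Fin (d i + 1), ((m : ℝ) / (d i) - x i) ^ 2 * w i (m : ℕ) ≤
      1 / (4 * (d i : ℝ)) := by
    intro i
    rw [Fin.sum_univ_eq_sum_range (fun m => ((m : ℝ) / (d i) - x i) ^ 2 * w i m) (d i + 1)]
    exact bw_var_le (d i) (hd i) (x i) (hx i)
  have hpk : ∀ k i, p k i = (k i : ℝ) / (d i) := by
    intro k i; simp [hpdef]
  have hpmem : ∀ k, ∀ i, p k i ∈ Set.Icc (0:ℝ) 1 := by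
    intro k i
    rw [hpk]
    have hdi : (0:ℝ) < d i := by exact_mod_cast hd i
    have hki : (k i : ℝ) ≤ d i := by
      have := Nat.lt_succ_iff.mp (k i).isLt
      exact_mod_cast this
    constructor
    · positivity
    · rw [div_le_one hdi]; exact hki
  have hnormsq : ∀ k, ‖p k - x‖ ^ 2 = ∑ i, ((k i : ℝ) / (d i) - x i) ^ 2 := by
    intro k
    rw [EuclideanSpace.norm_eq, Real.sq_sqrt (by positivity)]
    refine Finset.sum_congr rfl fun i _ => ?_
    rw [Real.norm_eq_abs, sq_abs]
    congr 1
  have hS : ∀ i, ∑ k, ((k i : ℝ) / (d i) - x i) ^ 2 * W k ≤ 1 / (4 * (d i : ℝ)) := by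
    intro i
    have hfac : ∑ k, ((k i : ℝ) / (d i) - x i) ^ 2 * W k =
        ∏ j, ∑ m : Fin (d j + 1),
          (if j = i then ((m : ℝ) / (d j) - x j) ^ 2 else 1) * w j (m : ℕ) := by
      rw [Fintype.prod_sum]
      refine Finset.sum_congr rfl fun k _ => ?_
      rw [Finset.prod_mul_distrib]
      have h1 : ∏ j, (if j = i then ((k j : ℝ) / (d j) - x j) ^ 2 else 1) =
          ((k i : ℝ) / (d i) - x i) ^ 2 := by
        rw [Finset.prod_eq_single i]
        · simp
        · intro j _ hj; simp [hj]
        · simp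
      rw [h1]
    rw [hfac, Finset.prod_eq_single i]
    · simpa using hvar i
    · intro j _ hj; simp only [if_neg hj, one_mul]; exact hwsum j
    · simp
  have hsum2 : ∑ k, ‖p k - x‖ ^ 2 * W k ≤ ∑ i, 1 / (4 * (d i : ℝ)) := by
    calc ∑ k, ‖p k - x‖ ^ 2 * W k
        = ∑ k, ∑ i, ((k i : ℝ) / (d i) - x i) ^ 2 * W k := by
          simp_rw [hnormsq, Finset.sum_mul]
      _ = ∑ i, ∑ k, ((k i : ℝ) / (d i) - x i) ^ 2 * W k := Finset.sum_comm
      _ ≤ ∑ i, 1 / (4 * (d i : ℝ)) := Finset.sum_le_sum fun i _ => hS i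
  set T : ℝ := ∑ k, ‖p k - x‖ * W k with hTdef
  have hT0 : 0 ≤ T :=
    Finset.sum_nonneg fun k _ => mul_nonneg (norm_nonneg _) (hW0 k)
  have hT2 : T ^ 2 ≤ ∑ i, 1 / (4 * (d i : ℝ)) := by
    have cs := Finset.sum_mul_sq_le_sq_mul_sq Finset.univ
      (fun k => Real.sqrt (W k)) (fun k => Real.sqrt (W k) * ‖p k - x‖)
    have e1 : ∀ k, Real.sqrt (W k) * (Real.sqrt (W k) * ‖p k - x‖) = ‖p k - x‖ * W k := by
      intro k; rw [← mul_assoc, Real.mul_self_sqrt (hW0 k)]; ring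
    have e2 : ∀ k, Real.sqrt (W k) ^ 2 = W k := fun k => Real.sq_sqrt (hW0 k)
    have e3 : ∀ k, (Real.sqrt (W k) * ‖p k - x‖) ^ 2 = ‖p k - x‖ ^ 2 * W k := by
      intro k; rw [mul_pow, e2]; ring
    simp_rw [e1, e2, e3] at cs
    calc T ^ 2 ≤ (∑ k, W k) * ∑ k, ‖p k - x‖ ^ 2 * W k := cs
      _ = ∑ k, ‖p k - x‖ ^ 2 * W k := by rw [hW1, one_mul]
      _ ≤ _ := hsum2
  have hsqrt : Real.sqrt (∑ i, 1 / (4 * (d i : ℝ))) =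
      1 / 2 * Real.sqrt (∑ i : Fin n, 1 / (d i : ℝ)) := by
    have : ∑ i, 1 / (4 * (d i : ℝ)) = (1/4) * ∑ i : Fin n, 1 / (d i : ℝ) := by
      rw [Finset.mul_sum]
      refine Finset.sum_congr rfl fun i _ => ?_
      ring
    rw [this, Real.sqrt_mul (by norm_num),
      show (1/4:ℝ) = (1/2)^2 by norm_num, Real.sqrt_sq (by norm_num)]
  have hTle : T ≤ 1 / 2 * Real.sqrt (∑ i : Fin n, 1 / (d i : ℝ)) := by
    rw [← hsqrt, ← Real.sqrt_sq hT0]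
    exact Real.sqrt_le_sqrt hT2
  have key : bernstein' d f x - f x = ∑ k, (f (p k) - f x) * W k := by
    have hB : bernstein' d f x = ∑ k, f (p k) * W k := rfl
    have hfx : f x = ∑ k, f x * W k := by rw [← Finset.mul_sum, hW1, mul_one]
    rw [hB]
    conv_lhs => rw [hfx]
    rw [← Finset.sum_sub_distrib]
    refine Finset.sum_congr rfl fun k _ => ?_
    ring
  rw [key]
  calc |∑ k, (f (p k) - f x) * W k| ≤ ∑ k, |(f (p k) - f x) * W k| :=
        Finset.abs_sum_le_sum_abs _ _
    _ = ∑ k, |f (p k) - f x| * W k := by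
        refine Finset.sum_congr rfl fun k _ => ?_
        rw [abs_mul, abs_of_nonneg (hW0 k)]
    _ ≤ ∑ k, (L * ‖p k - x‖) * W k := by
        refine Finset.sum_le_sum fun k _ => ?_
        exact mul_le_mul_of_nonneg_right (hf (p k) (hpmem k) x hx) (hW0 k)
    _ = L * T := by rw [hTdef, Finset.mul_sum]; refine Finset.sum_congr rfl fun k _ => ?_; ring
    _ ≤ L * (1 / 2 * Real.sqrt (∑ i : Fin n, 1 / (d i : ℝ))) :=
        mul_le_mul_of_nonneg_left hTle hL.le
    _ = L / 2 * Real.sqrt (∑ i : Fin n, 1 / (d i : ℝ)) := by ring
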